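/- arXiv:2407.03321 — 3 statements merged into one kernel-verified Lean document; each statement's English description precedes it below -/
import Mathlib

section
/- Equivalence of fully specified goals implies equivalence of original goals: if f : L¹ → L² is a bijection with s₀² = f[s₀¹] and action correspondence, and the fully specified goals satisfy g²* = f[g¹*] (where g* is g augmented with all propositions true in every reachable goal state of g), then the reachable goal-state sets of the original goals correspond: {s reachable in P² : g² ⊆ s} = {f[s] : s reachable in P¹, g¹ ⊆ s}. -/
structure PAction (L : Type*) where
  pre : Set L
  add : Set L
  del : Set L

/-- The transition function γ(s, a) = (s \ del(a)) ∪ add(a). -/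
def applyAction {L : Type*} (s : Set L) (a : PAction L) : Set L := (s \ a.del) ∪ a.add

/-- Reachability by finite applicable action sequences. -/
inductive Reachable {L : Type*} (A : Set (PAction L)) (s0 : Set L) : Set L → Prop
  | refl : Reachable A s0 s0
  | step {s : Set L} {a : PAction L} : Reachable A s0 s → a ∈ A → a.pre ⊆ s →
      Reachable A s0 (applyAction s a)

/-- The full specification of a goal: `g` plus every proposition that is true in every
reachable state containing `g`. -/
def fullSpec {L : Type*} (A : Set (PAction L)) (s0 g : Set L) : Set L :=
  g ∪ {t : L | ∀ s : Set L, Reachable A s0 s → g ⊆ s → t ∈ s}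

def mapAction {L1 L2 : Type*} (f : L1 → L2) (a : PAction L1) : PAction L2 :=
  ⟨f '' a.pre, f '' a.add, f '' a.del⟩

section Relabel

variable {L1 L2 : Type*} {f : L1 → L2}

theorem image_applyAction (hf : Function.Injective f) (s : Set L1) (a : PAction L1) :
    f '' applyAction s a = applyAction (f '' s) (mapAction f a) := by
  simp only [applyAction, mapAction, Set.image_union, Set.image_sdiff hf]

theorem Reachable.image (hf : Function.Injective f) {A : Set (PAction L1)} {s0 s : Set L1}
    (hs : Reachable A s0 s) : Reachable (mapAction f '' A) (f '' s0) (f '' s) := by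
  induction hs with
  | refl => exact .refl
  | step _ ha hpre ih =>
    rw [image_applyAction hf]
    exact ih.step (Set.mem_image_of_mem _ ha) (Set.image_mono hpre)

theorem Reachable.exists_of_image (hf : Function.Injective f) {A : Set (PAction L1)}
    {s0 : Set L1} {s : Set L2} (hs : Reachable (mapAction f '' A) (f '' s0) s) :
    ∃ t, Reachable A s0 t ∧ f '' t = s := by
  induction hs with
  | refl => exact ⟨s0, .refl, rfl⟩
  | step _ ha hpre ih =>
    obtain ⟨t, ht, rfl⟩ := ih
    obtain ⟨a, ha, rfl⟩ := ha
    exact ⟨applyAction t a, ht.step ha ((Set.image_subset_image_iff hf).1 hpre),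
      image_applyAction hf t a⟩

end Relabel

theorem fullSpec_subset_iff {L : Type*} {A : Set (PAction L)} {s0 g s : Set L}
    (hs : Reachable A s0 s) : fullSpec A s0 g ⊆ s ↔ g ⊆ s :=
  ⟨Set.subset_union_left.trans, fun hg => Set.union_subset hg fun _ ht => ht s hs hg⟩

/-- Equivalence of fully specified goals implies correspondence of the reachable
goal-state sets of the original goals. -/
theorem fullSpec_equiv_implies_goalStates_correspond {L1 L2 : Type*} (f : L1 ≃ L2)
    (A1 : Set (PAction L1)) (A2 : Set (PAction L2))
    (s01 : Set L1) (s02 : Set L2) (g1 : Set L1) (g2 : Set L2)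
    (hact : A2 = (mapAction ⇑f) '' A1)
    (hinit : s02 = ⇑f '' s01)
    (hfull : fullSpec A2 s02 g2 = ⇑f '' fullSpec A1 s01 g1) :
    {s : Set L2 | Reachable A2 s02 s ∧ g2 ⊆ s} =
      (fun s : Set L1 => ⇑f '' s) '' {s : Set L1 | Reachable A1 s01 s ∧ g1 ⊆ s} := by
  subst hact hinit
  -- A state is a goal state iff it contains the full specification, and `f` preserves that.
  have hgoal : ∀ t, Reachable A1 s01 t → (g2 ⊆ f '' t ↔ g1 ⊆ t) := fun t ht => by
    rw [← fullSpec_subset_iff (ht.image f.injective), hfull, Set.image_subset_image_iff f.injective,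
      fullSpec_subset_iff ht]
  ext s
  constructor
  · rintro ⟨hs, hg⟩
    obtain ⟨t, ht, rfl⟩ := hs.exists_of_image f.injective
    exact ⟨t, ⟨ht, (hgoal t ht).1 hg⟩, rfl⟩
  · rintro ⟨t, ⟨ht, hg⟩, rfl⟩
    exact ⟨ht.image f.injective, (hgoal t ht).2 hg⟩
end

section
/- If the problem graphs (joined initial and goal scene graphs) of two PDDL problems are isomorphic via a type-, label-, and scene-attribute-preserving isomorphism, then the initial scene graphs are isomorphic and the goal scene graphs are isomorphic; the converse fails in general (there exist pairs of problems whose initial scenes and goal scenes are separately isomorphic but whose joined problem graphs are not isomorphic). -/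
/-- A scene over object set `O`: proposition nodes with a predicate label, and labeled
edges `arg p n o` meaning object `o` is the `n`-th argument of proposition `p`. -/
structure Scene (O : Type*) where
  P : Type
  pred : P → ℕ
  arg : P → ℕ → O → Prop

/-- A scene isomorphism over a given object bijection `φ`: a bijection of proposition
nodes preserving predicate labels and argument edges (with positions). -/
def SceneIso {O1 O2 : Type*} (φ : O1 ≃ O2) (S1 : Scene O1) (S2 : Scene O2) : Prop :=
  ∃ π : S1.P ≃ S2.P, ∀ p : S1.P,
    S2.pred (π p) = S1.pred p ∧ ∀ (n : ℕ) (o : O1), (S2.arg (π p) n (φ o) ↔ S1.arg p n o)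

/-- A problem-graph isomorphism: a single object bijection under which both the
init-tagged part and the goal-tagged part of the joined graph correspond. -/
def ProblemIso {O1 O2 : Type*} (I1 G1 : Scene O1) (I2 G2 : Scene O2) : Prop :=
  ∃ φ : O1 ≃ O2, SceneIso φ I1 I2 ∧ SceneIso φ G1 G2

/-- Scene with one proposition whose single argument is the object `b`. -/
def mark (b : Bool) : Scene Bool := ⟨Unit, fun _ => 0, fun _ _ o => o = b⟩

/-- Boolean negation as an equivalence. -/
def boolNot : Bool ≃ Bool := ⟨Bool.not, Bool.not, fun b => by cases b <;> rfl,
  fun b => by cases b <;> rfl⟩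

/-- If the joined problem graphs are isomorphic then the initial scenes are isomorphic
and the goal scenes are isomorphic; the converse fails in general. -/
theorem problemIso_implies_sceneIsos_not_conversely :
    (∀ (O1 O2 : Type) (I1 G1 : Scene O1) (I2 G2 : Scene O2),
        ProblemIso I1 G1 I2 G2 →
          (∃ φ : O1 ≃ O2, SceneIso φ I1 I2) ∧ (∃ ψ : O1 ≃ O2, SceneIso ψ G1 G2)) ∧
      ∃ (O1 O2 : Type) (I1 G1 : Scene O1) (I2 G2 : Scene O2),
        (∃ φ : O1 ≃ O2, SceneIso φ I1 I2) ∧ (∃ ψ : O1 ≃ O2, SceneIso ψ G1 G2) ∧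
          ¬ ProblemIso I1 G1 I2 G2 := by
  constructor
  · rintro O1 O2 I1 G1 I2 G2 ⟨φ, hI, hG⟩
    exact ⟨⟨φ, hI⟩, ⟨φ, hG⟩⟩
  · -- counterexample: mark a single object
    refine ⟨Bool, Bool, mark true, mark true, mark true, mark false, ?_, ?_, ?_⟩
    · exact ⟨Equiv.refl Bool, Equiv.refl Unit, fun _ => ⟨rfl, fun _ _ => Iff.rfl⟩⟩
    · refine ⟨boolNot, Equiv.refl Unit, fun _ => ⟨rfl, fun n o => ?_⟩⟩
      cases o <;> simp [mark, boolNot]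
    · rintro ⟨φ, ⟨_, hI⟩, ⟨_, hG⟩⟩
      have h1 : φ true = true := ((hI ()).2 0 true).mpr rfl
      have h2 : φ true = false := ((hG ()).2 0 true).mpr rfl
      simp [h1] at h2
end

section
/- Object-permutation equivalence is coarser than strict equivalence: if two PDDL problems are equivalent under Definition 2 (with object identity), then they are also equivalent under the placeholder criterion (initial scenes isomorphic and fully specified goal scenes isomorphic, possibly via different object bijections), but not conversely: there exist problems whose initial scenes and fully specified goal scenes are separately isomorphic yet no single object bijection makes the joined problem graphs isomorphic. -/
/-- Strict equivalence (Definition 2, with object identity): a single object bijection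
making the joined problem graphs — initial scene and fully specified goal scene —
isomorphic. -/
def StrictEquiv {O1 O2 : Type*} (I1 G1 : Scene O1) (I2 G2 : Scene O2) : Prop :=
  ∃ φ : O1 ≃ O2, SceneIso φ I1 I2 ∧ SceneIso φ G1 G2

/-- Placeholder equivalence: initial scenes isomorphic and fully specified goal scenes
isomorphic, possibly via different object bijections. -/
def PlaceholderEquiv {O1 O2 : Type*} (I1 G1 : Scene O1) (I2 G2 : Scene O2) : Prop :=
  (∃ φ : O1 ≃ O2, SceneIso φ I1 I2) ∧ (∃ ψ : O1 ≃ O2, SceneIso ψ G1 G2)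

/-- Object-permutation (placeholder) equivalence is strictly coarser than strict
equivalence. -/
theorem placeholder_coarser_than_strict :
    (∀ (O1 O2 : Type) (I1 G1 : Scene O1) (I2 G2 : Scene O2),
        StrictEquiv I1 G1 I2 G2 → PlaceholderEquiv I1 G1 I2 G2) ∧
      ∃ (O1 O2 : Type) (I1 G1 : Scene O1) (I2 G2 : Scene O2),
        PlaceholderEquiv I1 G1 I2 G2 ∧ ¬ StrictEquiv I1 G1 I2 G2 := by
  constructor
  · rintro O1 O2 I1 G1 I2 G2 ⟨φ, hI, hG⟩
    exact ⟨⟨φ, hI⟩, ⟨φ, hG⟩⟩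
  · refine ⟨Bool, Bool,
      ⟨Unit, fun _ => 0, fun _ _ o => o = true⟩,
      ⟨Unit, fun _ => 0, fun _ _ o => o = true⟩,
      ⟨Unit, fun _ => 0, fun _ _ o => o = true⟩,
      ⟨Unit, fun _ => 0, fun _ _ o => o = false⟩, ⟨⟨?_, ?_⟩, ?_⟩⟩
    · exact ⟨Equiv.refl Bool, Equiv.refl Unit, fun p => ⟨rfl, fun n o => Iff.rfl⟩⟩
    · refine ⟨⟨not, not, fun b => by simp, fun b => by simp⟩,
        Equiv.refl Unit, fun p => ⟨rfl, fun n o => ?_⟩⟩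
      simp
    · rintro ⟨φ, ⟨πI, hI⟩, ⟨πG, hG⟩⟩
      have h1 := ((hI ()).2 0 true).mpr rfl
      have h2 := ((hG ()).2 0 true).mpr rfl
      simp only at h1 h2
      rw [h1] at h2
      exact Bool.noConfusion h2
end
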